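/- arXiv:2201.01189 — 2 statements merged into one kernel-verified Lean document; each statement's English description precedes it below -/
import Mathlib

section
/- The Appell $F_1$ double series $\sum_{m,n \geq 0} \frac{(a)_{m+n}(b)_m(b')_n}{(c)_{m+n}\, m!\, n!} x^m y^n$ converges absolutely whenever $\max(|x|, |y|) < 1$, where $a, b, b', c$ are complex numbers and $c$ is not a nonpositive integer. -/
/-!
Each ratio `(a)_k / (c)_k` is a product of the factors `(a + j) / (c + j)`, which tend to `1`,
so it is `O(q ^ k)` for every `q > 1`; the same holds for `(b)_k / k! = (b)_k / (1)_k`.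
Taking `q > 1` with `q ^ 2 * max ‖x‖ ‖y‖ < 1`, the terms of the series are
`O((q ^ 2 * ‖x‖) ^ m * (q ^ 2 * ‖y‖) ^ n)`, a product of two convergent geometric series.
-/

open Filter Topology Asymptotics

lemma isBigO_pow_of_eventually_norm_succ_le {E : Type*} [SeminormedAddCommGroup E] {u : ℕ → E}
    {q : ℝ} (hq : 0 < q) (h : ∀ᶠ k in atTop, ‖u (k + 1)‖ ≤ q * ‖u k‖) :
    u =O[atTop] (q ^ ·) := by
  obtain ⟨N, hN⟩ := eventually_atTop.1 h
  refine IsBigO.of_bound (‖u N‖ / q ^ N) ?_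
  filter_upwards [eventually_ge_atTop N] with k hk
  obtain ⟨d, rfl⟩ := Nat.exists_eq_add_of_le hk
  calc ‖u (N + d)‖ ≤ q ^ d * ‖u N‖ :=
        le_geom (u := fun i ↦ ‖u (N + i)‖) hq.le d fun i _ ↦ hN (N + i) (N.le_add_right i)
    _ = ‖u N‖ / q ^ N * ‖q ^ (N + d)‖ := by
        rw [norm_pow, Real.norm_of_nonneg hq.le, pow_add]
        field_simp

section RCLike

variable {𝕜 : Type*} [RCLike 𝕜]

lemma ascPochhammer_succ_eval_div (a c : 𝕜) (k : ℕ) :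
    (ascPochhammer 𝕜 (k + 1)).eval a / (ascPochhammer 𝕜 (k + 1)).eval c =
      (ascPochhammer 𝕜 k).eval a / (ascPochhammer 𝕜 k).eval c * ((a + k) / (c + k)) := by
  rw [ascPochhammer_succ_eval, ascPochhammer_succ_eval, mul_div_mul_comm]

lemma tendsto_add_natCast_div_add_natCast_atTop (a c : 𝕜) :
    Tendsto (fun k : ℕ ↦ (a + k) / (c + k)) atTop (𝓝 1) := by
  simpa using tendsto_add_mul_div_add_mul_atTop_nhds a c (1 : 𝕜) one_ne_zero

lemma isBigO_top_ascPochhammer_eval_div_pow (a c : 𝕜) {q : ℝ} (hq : 1 < q) :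
    (fun k ↦ (ascPochhammer 𝕜 k).eval a / (ascPochhammer 𝕜 k).eval c) =O[⊤] (q ^ ·) := by
  have hq0 : 0 < q := one_pos.trans hq
  have hratio : ∀ᶠ k : ℕ in atTop, ‖(a + k) / (c + k)‖ ≤ q :=
    (tendsto_add_natCast_div_add_natCast_atTop a c).norm.eventually_le_const (by simpa using hq)
  refine (isBigO_pow_of_eventually_norm_succ_le hq0 ?_).nat_of_atTop
    (.of_forall fun k hk ↦ absurd hk (pow_ne_zero k hq0.ne'))
  filter_upwards [hratio] with k hk
  rw [ascPochhammer_succ_eval_div, norm_mul, mul_comm]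
  exact mul_le_mul_of_nonneg_right hk (norm_nonneg _)

end RCLike

lemma exists_one_lt_sq_mul_lt_one {ρ : ℝ} (hρ : ρ < 1) : ∃ q : ℝ, 1 < q ∧ q ^ 2 * ρ < 1 := by
  have hnear : ∀ᶠ q in 𝓝 (1 : ℝ), q ^ 2 * ρ < 1 :=
    (continuous_pow 2 |>.mul continuous_const).continuousAt.eventually_lt continuousAt_const
      (by simpa using hρ)
  have hright : ∀ᶠ q in 𝓝[>] (1 : ℝ), q ^ 2 * ρ < 1 := nhdsWithin_le_nhds hnear
  exact (eventually_mem_nhdsWithin.and hright).exists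

theorem appellF1_summable_general (a b b' c : ℂ)
    (x y : ℂ) (hxy : max ‖x‖ ‖y‖ < 1) :
    Summable (fun mn : ℕ × ℕ =>
      ‖(ascPochhammer ℂ (mn.1 + mn.2)).eval a * (ascPochhammer ℂ mn.1).eval b *
          (ascPochhammer ℂ mn.2).eval b' /
        ((ascPochhammer ℂ (mn.1 + mn.2)).eval c * (mn.1.factorial : ℂ) *
          (mn.2.factorial : ℂ)) * x ^ mn.1 * y ^ mn.2‖) := by
  obtain ⟨q, hq, hqρ⟩ := exists_one_lt_sq_mul_lt_one hxy
  have hqx : q ^ 2 * ‖x‖ < 1 :=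
    (mul_le_mul_of_nonneg_left (le_max_left _ _) (sq_nonneg q)).trans_lt hqρ
  have hqy : q ^ 2 * ‖y‖ < 1 :=
    (mul_le_mul_of_nonneg_left (le_max_right _ _) (sq_nonneg q)).trans_lt hqρ
  have hgeom : Summable fun mn : ℕ × ℕ ↦ (q ^ 2 * ‖x‖) ^ mn.1 * (q ^ 2 * ‖y‖) ^ mn.2 :=
    (summable_geometric_of_lt_one (by positivity) hqx).mul_of_nonneg
      (summable_geometric_of_lt_one (by positivity) hqy) (fun _ ↦ by positivity)
      (fun _ ↦ by positivity)
  have hA := (isBigO_top_ascPochhammer_eval_div_pow a c hq).comp_tendsto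
    (tendsto_top (l := ⊤) (f := fun mn : ℕ × ℕ ↦ mn.1 + mn.2))
  have hB := (isBigO_top_ascPochhammer_eval_div_pow b 1 hq).comp_tendsto
    (tendsto_top (l := ⊤) (f := @Prod.fst ℕ ℕ))
  have hB' := (isBigO_top_ascPochhammer_eval_div_pow b' 1 hq).comp_tendsto
    (tendsto_top (l := ⊤) (f := @Prod.snd ℕ ℕ))
  have hx := isBigO_norm_right.2 (isBigO_refl (fun mn : ℕ × ℕ ↦ x ^ mn.1) ⊤)
  have hy := isBigO_norm_right.2 (isBigO_refl (fun mn : ℕ × ℕ ↦ y ^ mn.2) ⊤)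
  have hbound := ((((hA.mul hB).mul hB').mul hx).mul hy).norm_left.mono (le_top (a := cofinite))
  refine summable_of_isBigO hgeom (hbound.congr (fun mn ↦ ?_) (fun mn ↦ ?_))
  · simp only [Function.comp_apply, ascPochhammer_eval_one]
    congr 1
    ring
  · simp only [Function.comp_apply, norm_pow]
    ring

/-- The Appell `F₁` double series converges absolutely for `max (|x|, |y|) < 1`. -/
theorem appellF1_summable (a b b' c : ℂ) (hc : ∀ k : ℕ, c ≠ -(k : ℂ))
    (x y : ℂ) (hxy : max ‖x‖ ‖y‖ < 1) :
    Summable (fun mn : ℕ × ℕ =>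
      ‖(ascPochhammer ℂ (mn.1 + mn.2)).eval a * (ascPochhammer ℂ mn.1).eval b *
          (ascPochhammer ℂ mn.2).eval b' /
        ((ascPochhammer ℂ (mn.1 + mn.2)).eval c * (mn.1.factorial : ℂ) *
          (mn.2.factorial : ℂ)) * x ^ mn.1 * y ^ mn.2‖) :=
  appellF1_summable_general a b b' c x y hxy
end

section
/- Pfaff transformation of the Gauss hypergeometric function: for complex $a, b, c$ with $c$ not a nonpositive integer, and real $z$ with $0 \leq z < 1/2$ (so that $|z/(z-1)| < 1$), one has ${}_2F_1(a,b;c;z) = (1-z)^{-a}\, {}_2F_1\left(a, c-b; c; \frac{z}{z-1}\right)$. -/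
/-!
Since `z / (z - 1) = -z / (1 - z)`, the right-hand side is `∑ₛ Aₛ (-z)ˢ (1 - z)^(-(a + s))`,
with `Aₛ` the coefficients of `₂F₁(a, c - b; c)`. Expanding every `(1 - z)^(-(a + s))` by the
binomial series gives a double series in `z`; for `‖z‖ < 1/2` it is dominated by
`(1 - ‖z‖)^(-‖a‖) ∑ₛ ‖Aₛ‖ (‖z‖ / (1 - ‖z‖))ˢ`, which converges because `‖z‖ / (1 - ‖z‖) < 1`.
Summing it along antidiagonals instead, the coefficient of `zⁿ` is
`(a)ₙ / (n! (c)ₙ) · ∑ₛ C(n, s) (-1)ˢ (c - b)ₛ (c + s)ₙ₋ₛ`, and the Chu–Vandermonde identity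
turns the sum into `(b)ₙ`.
-/

open Finset Filter Nat Polynomial

section Algebra

variable {R : Type*} [CommRing R]

theorem ascPochhammer_eval_mul_eval_add (x : R) (i j : ℕ) :
    (ascPochhammer R i).eval x * (ascPochhammer R j).eval (x + i) =
      (ascPochhammer R (i + j)).eval x := by
  rw [← ascPochhammer_mul, eval_mul, eval_comp, eval_add, eval_X, eval_natCast]

theorem descPochhammer_smeval_eq_eval (r : R) (k : ℕ) :
    (descPochhammer ℤ k).smeval r = (descPochhammer R k).eval r := by
  rw [descPochhammer_smeval_eq_ascPochhammer, ascPochhammer_smeval_eq_eval,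
    descPochhammer_eval_eq_ascPochhammer]

theorem sum_antidiagonal_choose_mul_neg_one_pow_mul_ascPochhammer (x y : R) (n : ℕ) :
    ∑ ij ∈ antidiagonal n, (n.choose ij.1 : R) * (-1) ^ ij.1 *
        (ascPochhammer R ij.1).eval x * (ascPochhammer R ij.2).eval (y + ij.1) =
      (ascPochhammer R n).eval (y - x) := by
  -- Chu–Vandermonde for falling factorials at `-x` and `y + n - 1`, since `(-1)ˢ (x)ₛ` is the
  -- falling factorial of `-x` of length `s`.
  have := Ring.descPochhammer_smeval_add (r := -x) (s := y + n - 1) n (Commute.all _ _)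
  simp only [descPochhammer_smeval_eq_eval, descPochhammer_eval_eq_ascPochhammer] at this
  convert this.symm using 1
  · refine sum_congr rfl fun ij hij ↦ ?_
    rw [HasAntidiagonal.mem_antidiagonal] at hij
    have hx : (ascPochhammer R ij.1).eval x =
        (-1) ^ ij.1 * (ascPochhammer R ij.1).eval (-x - ij.1 + 1) := by
      rw [← descPochhammer_eval_eq_ascPochhammer, ← ascPochhammer_eval_neg_eq_descPochhammer,
        neg_neg]
    have hy : y + n - 1 - ij.2 + 1 = y + ij.1 := by rw [← hij]; push_cast; ring
    have hsign : ((-1 : R) ^ ij.1) * (-1) ^ ij.1 = 1 := by rw [← mul_pow]; simp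
    rw [hx, hy]
    linear_combination (n.choose ij.1 * (ascPochhammer R ij.1).eval (-x - ij.1 + 1) *
      (ascPochhammer R ij.2).eval (y + ij.1)) * hsign
  · congr 1; ring

end Algebra

theorem ascPochhammer_eval_ne_zero {R : Type*} [CommRing R] [IsDomain R] {c : R}
    (hc : ∀ k : ℕ, c ≠ -k) (n : ℕ) : (ascPochhammer R n).eval c ≠ 0 := by
  rw [ne_eq, ascPochhammer_eval_eq_zero_iff]
  rintro ⟨k, -, hk⟩
  exact hc k (by rw [hk, neg_neg])

theorem sum_antidiagonal_ordinaryHypergeometricCoefficient_pfaff {𝕂 : Type*} [Field 𝕂]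
    [CharZero 𝕂] (a b c : 𝕂) (hc : ∀ k : ℕ, c ≠ -k) (n : ℕ) :
    ∑ ij ∈ antidiagonal n, ordinaryHypergeometricCoefficient a (c - b) c ij.1 * (-1) ^ ij.1 *
        ((ascPochhammer 𝕂 ij.2).eval (a + ij.1) / ij.2 !) =
      ordinaryHypergeometricCoefficient a b c n := by
  have hterm : ∀ ij ∈ antidiagonal n,
      ordinaryHypergeometricCoefficient a (c - b) c ij.1 * (-1) ^ ij.1 *
          ((ascPochhammer 𝕂 ij.2).eval (a + ij.1) / ij.2 !) =
        (ascPochhammer 𝕂 n).eval a / (n ! * (ascPochhammer 𝕂 n).eval c) *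
          ((n.choose ij.1 : 𝕂) * (-1) ^ ij.1 * (ascPochhammer 𝕂 ij.1).eval (c - b) *
            (ascPochhammer 𝕂 ij.2).eval (c + ij.1)) := by
    rintro ⟨i, j⟩ hij
    rw [HasAntidiagonal.mem_antidiagonal] at hij
    subst hij
    have hc' := ascPochhammer_eval_ne_zero hc (i + j)
    rw [← ascPochhammer_eval_mul_eval_add] at hc'
    obtain ⟨hci, hcj⟩ := mul_ne_zero_iff.mp hc'
    rw [← ascPochhammer_eval_mul_eval_add a, ← ascPochhammer_eval_mul_eval_add c,
      ← Nat.add_choose_mul_factorial_mul_factorial, Nat.choose_symm_add]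
    have hchoose : ((i + j).choose j : 𝕂) ≠ 0 := by simp [Nat.choose_eq_zero_iff]
    push_cast
    field_simp
  rw [sum_congr rfl hterm, ← mul_sum, sum_antidiagonal_choose_mul_neg_one_pow_mul_ascPochhammer,
    sub_sub_cancel]
  ring

theorem ascPochhammer_eval_nonneg {S : Type*} [Semiring S] [PartialOrder S] [IsOrderedRing S]
    {s : S} (hs : 0 ≤ s) (n : ℕ) : 0 ≤ (ascPochhammer S n).eval s := by
  induction n with
  | zero => simp
  | succ n ih =>
    rw [ascPochhammer_succ_eval]
    exact mul_nonneg ih (add_nonneg hs n.cast_nonneg)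

theorem norm_ascPochhammer_eval_le {R : Type*} [NormedCommRing R] [NormOneClass R] {x : R}
    {y : ℝ} (h : ‖x‖ ≤ y) (n : ℕ) : ‖(ascPochhammer R n).eval x‖ ≤ (ascPochhammer ℝ n).eval y := by
  induction n with
  | zero => simp
  | succ n ih =>
    rw [ascPochhammer_succ_eval, ascPochhammer_succ_eval]
    have hxn : ‖x + n‖ ≤ y + n :=
      (norm_add_le _ _).trans (add_le_add h ((Nat.norm_cast_le n).trans_eq (by simp)))
    exact (norm_mul_le _ _).trans (mul_le_mul ih hxn (norm_nonneg _) ((norm_nonneg _).trans ih))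

theorem HasSum.sum_antidiagonal {A α : Type*} [AddCommMonoid A] [HasAntidiagonal A]
    [AddCommMonoid α] [TopologicalSpace α] [ContinuousAdd α] [RegularSpace α]
    {f : A × A → α} {a : α} (hf : HasSum f a) :
    HasSum (fun n ↦ ∑ kl ∈ antidiagonal n, f kl) a := by
  have := (HasAntidiagonal.sigmaAntidiagonalEquivProd.hasSum_iff (f := f)).mpr hf
  refine this.sigma fun n ↦ ?_
  rw [← sum_coe_sort]
  exact hasSum_fintype _

theorem one_le_ordinaryHypergeometricSeries_radius {𝕂 : Type*} (𝔸 : Type*) [RCLike 𝕂]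
    [NormedDivisionRing 𝔸] [NormedAlgebra 𝕂 𝔸] (a b c : 𝕂) (hc : ∀ k : ℕ, c ≠ -k) :
    1 ≤ (ordinaryHypergeometricSeries 𝔸 a b c).radius := by
  by_cases ha : ∃ k : ℕ, a = -k
  · obtain ⟨k, rfl⟩ := ha
    simp [ordinaryHypergeometric_radius_top_of_neg_nat₁]
  by_cases hb : ∃ k : ℕ, b = -k
  · obtain ⟨k, rfl⟩ := hb
    simp [ordinaryHypergeometric_radius_top_of_neg_nat₂]
  push Not at ha hb
  refine (ordinaryHypergeometricSeries_radius_eq_one 𝔸 a b c fun k ↦ ?_).ge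
  exact ⟨fun h ↦ ha k (by rw [h, neg_neg]), fun h ↦ hb k (by rw [h, neg_neg]),
    fun h ↦ hc k (by rw [h, neg_neg])⟩

theorem summable_norm_ordinaryHypergeometricCoefficient_mul_pow {𝕂 : Type*} [RCLike 𝕂]
    (a b c : 𝕂) (hc : ∀ k : ℕ, c ≠ -k) {r : ℝ} (hr0 : 0 ≤ r) (hr1 : r < 1) :
    Summable fun n ↦ ‖ordinaryHypergeometricCoefficient a b c n‖ * r ^ n := by
  lift r to NNReal using hr0
  have hr : (r : ENNReal) < (ordinaryHypergeometricSeries 𝕂 a b c).radius :=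
    lt_of_lt_of_le (by exact_mod_cast hr1) (one_le_ordinaryHypergeometricSeries_radius 𝕂 a b c hc)
  have := (ordinaryHypergeometricSeries 𝕂 a b c).summable_norm_mul_pow hr
  simp only [ordinaryHypergeometricSeries, FormalMultilinearSeries.ofScalars_norm] at this
  exact this

theorem Ring.choose_add_sub_one_eq_ascPochhammer_div {𝕂 : Type*} [Field 𝕂] [CharZero 𝕂]
    (r : 𝕂) (n : ℕ) :
    Ring.choose (r + n - 1) n = (ascPochhammer 𝕂 n).eval r / n ! := by
  rw [Ring.choose_eq_smul, Polynomial.descPochhammer_smeval_eq_ascPochhammer,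
    Polynomial.ascPochhammer_smeval_eq_eval, smul_eq_mul, inv_mul_eq_div]
  congr 2
  ring

theorem Complex.hasSum_ascPochhammer_div_factorial_mul_pow (r : ℂ) {x : ℂ} (hx : ‖x‖ < 1) :
    HasSum (fun n ↦ (ascPochhammer ℂ n).eval r / n ! * x ^ n) ((1 - x) ^ (-r)) := by
  have := (one_div_one_sub_cpow_hasFPowerSeriesOnBall_zero r).hasSum
    (y := x) (by rwa [Metric.mem_eball, edist_zero_right, ← ofReal_norm, ENNReal.ofReal_lt_one])
  simpa [FormalMultilinearSeries.ofScalars_apply_eq, Ring.choose_add_sub_one_eq_ascPochhammer_div,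
    cpow_neg, mul_comm] using this

theorem Real.hasSum_ascPochhammer_div_factorial_mul_pow (r : ℝ) {x : ℝ} (hx : |x| < 1) :
    HasSum (fun n ↦ (ascPochhammer ℝ n).eval r / n ! * x ^ n) ((1 - x) ^ (-r)) := by
  have := (one_div_one_sub_rpow_hasFPowerSeriesOnBall_zero r).hasSum
    (y := x) (by rwa [Metric.mem_eball, edist_zero_right, ← ofReal_norm, ENNReal.ofReal_lt_one])
  have h1x : 0 ≤ 1 - x := by linarith [le_abs_self x]
  simpa [FormalMultilinearSeries.ofScalars_apply_eq, Ring.choose_add_sub_one_eq_ascPochhammer_div,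
    rpow_neg h1x, mul_comm] using this

noncomputable def pfaffDoubleSeries (a b c z : ℂ) (p : ℕ × ℕ) : ℂ :=
  ordinaryHypergeometricCoefficient a (c - b) c p.1 * (-z) ^ p.1 *
    ((ascPochhammer ℂ p.2).eval (a + p.1) / p.2 ! * z ^ p.2)

theorem hasSum_pfaffDoubleSeries_row (a b c : ℂ) {z : ℂ} (hz : ‖z‖ < 1) (s : ℕ) :
    HasSum (fun m ↦ pfaffDoubleSeries a b c z (s, m))
      ((1 - z) ^ (-a) * (ordinaryHypergeometricCoefficient a (c - b) c s • (z / (z - 1)) ^ s)) := by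
  have h1z : 1 - z ≠ 0 := by
    rintro h
    rw [← eq_of_sub_eq_zero h, norm_one] at hz
    exact hz.false
  have hval : ordinaryHypergeometricCoefficient a (c - b) c s * (-z) ^ s * (1 - z) ^ (-(a + s)) =
      (1 - z) ^ (-a) * (ordinaryHypergeometricCoefficient a (c - b) c s • (z / (z - 1)) ^ s) := by
    rw [neg_add, Complex.cpow_add _ _ h1z, Complex.cpow_neg _ (s : ℂ), Complex.cpow_natCast,
      smul_eq_mul, show z / (z - 1) = -z / (1 - z) by rw [← neg_sub 1 z, div_neg, neg_div],
      div_pow, div_eq_mul_inv]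
    ring
  have := (Complex.hasSum_ascPochhammer_div_factorial_mul_pow (a + s) hz).mul_left
    (ordinaryHypergeometricCoefficient a (c - b) c s * (-z) ^ s)
  rw [hval] at this
  exact this

theorem sum_antidiagonal_pfaffDoubleSeries (a b c z : ℂ) (hc : ∀ k : ℕ, c ≠ -k) (n : ℕ) :
    ∑ ij ∈ antidiagonal n, pfaffDoubleSeries a b c z ij =
      ordinaryHypergeometricCoefficient a b c n • z ^ n := by
  rw [← sum_antidiagonal_ordinaryHypergeometricCoefficient_pfaff a b c hc n, smul_eq_mul, sum_mul]
  refine sum_congr rfl fun ij hij ↦ ?_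
  rw [HasAntidiagonal.mem_antidiagonal] at hij
  rw [pfaffDoubleSeries, ← hij, pow_add, neg_pow]
  ring

theorem summable_pfaffDoubleSeries (a b c : ℂ) (hc : ∀ k : ℕ, c ≠ -k) {z : ℂ}
    (hz : ‖z‖ < 1 / 2) : Summable (pfaffDoubleSeries a b c z) := by
  set t := ‖z‖
  have h1t : 0 < 1 - t := by linarith
  set A := ordinaryHypergeometricCoefficient a (c - b) c
  set M : ℕ × ℕ → ℝ := fun p ↦
    ‖A p.1‖ * t ^ p.1 * ((ascPochhammer ℝ p.2).eval (‖a‖ + p.1) / p.2 ! * t ^ p.2)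
  have hM_row : ∀ s,
      HasSum (fun m ↦ M (s, m)) ((1 - t) ^ (-‖a‖) * (‖A s‖ * (t / (1 - t)) ^ s)) := by
    intro s
    have hval : ‖A s‖ * t ^ s * (1 - t) ^ (-(‖a‖ + s)) =
        (1 - t) ^ (-‖a‖) * (‖A s‖ * (t / (1 - t)) ^ s) := by
      rw [neg_add, Real.rpow_add h1t, Real.rpow_neg h1t.le (s : ℝ), Real.rpow_natCast, div_pow,
        div_eq_mul_inv]
      ring
    have := (Real.hasSum_ascPochhammer_div_factorial_mul_pow (‖a‖ + s)
      (by rw [abs_of_nonneg (norm_nonneg z)]; linarith)).mul_left (‖A s‖ * t ^ s)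
    rw [hval] at this
    exact this
  have hM : Summable M := by
    refine (summable_prod_of_nonneg fun p ↦ ?_).mpr ⟨fun s ↦ (hM_row s).summable, ?_⟩
    · have := ascPochhammer_eval_nonneg (add_nonneg (norm_nonneg a) p.1.cast_nonneg) p.2
      positivity
    · simp_rw [(hM_row _).tsum_eq]
      exact (summable_norm_ordinaryHypergeometricCoefficient_mul_pow a (c - b) c hc
        (div_nonneg (norm_nonneg z) h1t.le) ((div_lt_one h1t).mpr (by linarith))).mul_left _
  refine hM.of_norm_bounded fun p ↦ ?_
  have hnorm : ‖pfaffDoubleSeries a b c z p‖ =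
      ‖A p.1‖ * t ^ p.1 * (‖(ascPochhammer ℂ p.2).eval (a + p.1)‖ / p.2 ! * t ^ p.2) := by
    simp only [pfaffDoubleSeries, A, t, norm_mul, norm_div, norm_pow, norm_neg,
      Complex.norm_natCast]
  rw [hnorm]
  dsimp only [M]
  gcongr
  exact norm_ascPochhammer_eval_le ((norm_add_le _ _).trans_eq (by rw [Complex.norm_natCast])) _

theorem ordinaryHypergeometric_pfaff (a b c : ℂ) (hc : ∀ k : ℕ, c ≠ -k) {z : ℂ}
    (hz : ‖z‖ < 1 / 2) :
    ₂F₁ a b c z = (1 - z) ^ (-a) * ₂F₁ a (c - b) c (z / (z - 1)) := by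
  have hT := (summable_pfaffDoubleSeries a b c hc hz).hasSum
  have hrows := hT.prod_fiberwise (hasSum_pfaffDoubleSeries_row a b c (by linarith))
  have hdiagonals := hT.sum_antidiagonal
  simp_rw [sum_antidiagonal_pfaffDoubleSeries a b c z hc] at hdiagonals
  rw [ordinaryHypergeometric_eq_tsum, ordinaryHypergeometric_eq_tsum, ← tsum_mul_left]
  exact hdiagonals.tsum_eq.trans hrows.tsum_eq.symm

/-- Pfaff transformation of the Gauss hypergeometric series, for `0 ≤ z < 1/2` real. -/
theorem gauss_2F1_pfaff (a b c : ℂ) (hc : ∀ k : ℕ, c ≠ -(k : ℂ))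
    (z : ℝ) (hz0 : 0 ≤ z) (hz1 : z < 1 / 2) :
    (∑' s : ℕ, (ascPochhammer ℂ s).eval a * (ascPochhammer ℂ s).eval b /
        ((ascPochhammer ℂ s).eval c * (s.factorial : ℂ)) * (z : ℂ) ^ s) =
      ((1 : ℂ) - (z : ℂ)) ^ (-a) *
        ∑' s : ℕ, (ascPochhammer ℂ s).eval a * (ascPochhammer ℂ s).eval (c - b) /
          ((ascPochhammer ℂ s).eval c * (s.factorial : ℂ)) *
            ((z / (z - 1) : ℝ) : ℂ) ^ s := by
  have hz : ‖(z : ℂ)‖ < 1 / 2 := by rwa [Complex.norm_real, Real.norm_of_nonneg hz0]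
  have hcoeff : ∀ x s, (ascPochhammer ℂ s).eval a * (ascPochhammer ℂ s).eval x /
      ((ascPochhammer ℂ s).eval c * (s.factorial : ℂ)) =
        ordinaryHypergeometricCoefficient a x c s := fun x s ↦ by ring
  have key := ordinaryHypergeometric_pfaff a b c hc hz
  rw [ordinaryHypergeometric_eq_tsum, ordinaryHypergeometric_eq_tsum] at key
  push_cast
  simp only [hcoeff]
  exact key
end
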